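/- Let n ≥ 1, m ≥ 0, and let P₁,…,P_n ∈ {0,1}^{m+1} be generator polynomials satisfying {z ∈ {1,…,n} : P_z.1 = 1} ≠ ∅. Define c : {0,1} × {0,1}^{≤m} → {0,1}^n by c(x, x₁…x_p) = (P₁[v],…,P_n[v]) where v = (x, x_p, x_{p−1}, …, x₁, 0,…,0) ∈ {0,1}^{m+1} and P_j[b₁…b_{m+1}] = ⊕_{z : P_j.z = 1} b_z. Then the homomorphic extension c̄ : {0,1}* → {0,1}* given by c̄(λ) = λ and c̄(x₁…x_t) = ∏_{i=1}^{t} c(x_i, x_{max(1,i−m)}…x_{i−1}) is injective; that is, the (n,1,m) convolutional code defined by P₁,…,P_n is an adaptive code of order m. -/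

import Mathlib

/-- The padded register vector `v = (x, x_p, x_{p-1}, …, x₁, 0, …, 0) ∈ {0,1}^{m+1}`
built from the current input bit `x` and the context `u = x₁x₂…x_p` (`p ≤ m`,
most recent bit last), padded with `m - p` zeros. -/
def convVec (m : ℕ) (x : ZMod 2) (u : List (ZMod 2)) : Fin (m + 1) → ZMod 2 :=
  fun k => if k.val = 0 then x else u.reverse.getD (k.val - 1) 0

/-- The encoding function of an `(n,1,m)` convolutional code with generator
polynomials `P 0, …, P (n-1)`: `c(x, x₁…x_p)` is the length-`n` string whose
`j`-th bit is `P_j[v] = ⊕_{z : P_j.z = 1} v_z`, the modulo-2 sum of the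
coordinates of `v` selected by `P_j`. -/
def convCode (n m : ℕ) (P : Fin n → Fin (m + 1) → ZMod 2)
    (x : ZMod 2) (u : List (ZMod 2)) : List (ZMod 2) :=
  (List.finRange n).map fun j => ∑ z : Fin (m + 1), P j z * convVec m x u z

/-- The homomorphic extension `c̄` of `c : Σ × Σ^{≤m} → Δ⁺`: the `i`-th
codeword is determined by the `i`-th symbol together with the (at most `m`)
immediately preceding symbols. -/
def adaptiveExt {S D : Type*} (c : S → List S → List D) (m : ℕ) (w : List S) : List D :=
  (List.finRange w.length).flatMap fun i => c (w.get i) ((w.take i).drop (i - m))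

/-!
All codewords have the same length `n > 0`, so `c̄ w` determines `|w|`, and the last block of
`c̄ (w ++ [x])` can be split off. By induction on the prefix, equal images have equal prefixes,
hence equal contexts for the last symbol; for a fixed context the code is injective in the current
bit, because an output `j` with `P_j.1 = 1` is `x ⊕ (a function of the context)`.
-/

section AdaptiveCode

variable {S D : Type*} (c : S → List S → List D) (m : ℕ)

theorem adaptiveExt_append_singleton (w : List S) (x : S) :
    adaptiveExt c m (w ++ [x]) = adaptiveExt c m w ++ c x (w.drop (w.length - m)) := by
  simp only [adaptiveExt, List.flatMap_def, ← List.ofFn_eq_map]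
  rw [List.ofFn_congr (List.length_append (bs := [x])), List.ofFn_succ']
  simp [List.getElem_append_left, List.take_append_of_le_length]

variable {c m} {n : ℕ}

theorem length_adaptiveExt (hlen : ∀ x u, (c x u).length = n) (w : List S) :
    (adaptiveExt c m w).length = w.length * n := by
  simp [adaptiveExt, List.length_flatMap, hlen]

theorem length_eq_of_adaptiveExt_eq (hn : 0 < n) (hlen : ∀ x u, (c x u).length = n)
    {w₁ w₂ : List S} (h : adaptiveExt c m w₁ = adaptiveExt c m w₂) : w₁.length = w₂.length :=
  Nat.eq_of_mul_eq_mul_right hn <| by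
    simpa only [length_adaptiveExt hlen] using congrArg List.length h

theorem adaptiveExt_injective (hn : 0 < n) (hlen : ∀ x u, (c x u).length = n)
    (hc : ∀ u, Function.Injective (c · u)) : Function.Injective (adaptiveExt c m) := by
  intro w₁
  induction w₁ using List.reverseRecOn with
  | nil =>
    intro w₂ h
    exact (List.eq_nil_of_length_eq_zero (length_eq_of_adaptiveExt_eq hn hlen h).symm).symm
  | append_singleton w₁ x ih =>
    intro w₂ h
    have hlen₁₂ := length_eq_of_adaptiveExt_eq hn hlen h
    obtain rfl | ⟨w₂, y, rfl⟩ := w₂.eq_nil_or_concat'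
    · simp at hlen₁₂
    rw [adaptiveExt_append_singleton, adaptiveExt_append_singleton] at h
    obtain ⟨hw, hxy⟩ := List.append_inj h <| by
      simpa [length_adaptiveExt hlen, hn.ne'] using hlen₁₂
    obtain rfl := ih hw
    rw [hc _ hxy]

end AdaptiveCode

section ConvolutionalCode

variable {n m : ℕ} (P : Fin n → Fin (m + 1) → ZMod 2)

theorem length_convCode (x : ZMod 2) (u : List (ZMod 2)) : (convCode n m P x u).length = n := by
  simp [convCode]

theorem sum_mul_convVec (p : Fin (m + 1) → ZMod 2) (x : ZMod 2) (u : List (ZMod 2)) :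
    ∑ z, p z * convVec m x u z = p 0 * x + ∑ z : Fin m, p z.succ * u.reverse.getD z 0 := by
  simp [Fin.sum_univ_succ, convVec]

theorem convCode_injective_left (hP : ∃ j, P j 0 = 1) (u : List (ZMod 2)) :
    Function.Injective (convCode n m P · u) := by
  obtain ⟨j, hj⟩ := hP
  intro x y h
  simpa [sum_mul_convVec, hj] using List.map_inj_left.mp h j (List.mem_finRange j)

end ConvolutionalCode

theorem convCode_is_adaptive_code_general (n m : ℕ)
    (P : Fin n → Fin (m + 1) → ZMod 2)
    (hP : ∃ z : Fin n, P z 0 = 1) :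
    Function.Injective (adaptiveExt (convCode n m P) m) :=
  adaptiveExt_injective hP.choose.pos (length_convCode P) (convCode_injective_left P hP)

/-- Any `(n,1,m)` convolutional code whose generator polynomials satisfy
`{z : P_z.1 = 1} ≠ ∅` is an adaptive code of order `m`: its homomorphic
extension `c̄` is injective. -/
theorem convCode_is_adaptive_code (n m : ℕ) (hn : 1 ≤ n)
    (P : Fin n → Fin (m + 1) → ZMod 2)
    (hP : ∃ z : Fin n, P z 0 = 1) :
    Function.Injective (adaptiveExt (convCode n m P) m) :=
  convCode_is_adaptive_code_general n m P hP
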